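/- arXiv:2603.16732 — 3 statements merged into one kernel-verified Lean document; each statement's English description precedes it below -/
import Mathlib

section
/- Let p and q be probability measures on a measurable space with q absolutely continuous with respect to p and KL(q‖p) finite. Let S be a measurable set with z = q(S) ∈ (0,1). Define the restricted-and-normalized measures q̃ = z⁻¹ · q|_S and q̃ᶜ = (1−z)⁻¹ · q|_{Sᶜ}. Then KL(q‖p) = z·KL(q̃‖p) + (1−z)·KL(q̃ᶜ‖p) − H(z), where H(z) = −z ln z − (1−z) ln(1−z) is the binary entropy. -/
open MeasureTheory ENNReal

/-- The Kullback–Leibler divergence `KL(q‖p) = ∫ log (dq/dp) dq`. -/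
noncomputable def KL {α : Type*} [MeasurableSpace α] (q p : Measure α) : ℝ :=
  ∫ x, Real.log (q.rnDeriv p x).toReal ∂q

/-- The binary entropy function `H(z) = −z ln z − (1−z) ln(1−z)`. -/
noncomputable def binEnt (z : ℝ) : ℝ :=
  -(z * Real.log z) - (1 - z) * Real.log (1 - z)

lemma kl_aux {α : Type*} [MeasurableSpace α]
    (p q : Measure α) [IsProbabilityMeasure p] [IsProbabilityMeasure q]
    (hac : q ≪ p)
    (hint : Integrable (fun x => Real.log (q.rnDeriv p x).toReal) q)
    (T : Set α) (hT : MeasurableSet T) (h0 : q T ≠ 0) :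
    (q T).toReal * KL ((q T)⁻¹ • q.restrict T) p
      = ∫ x in T, Real.log (q.rnDeriv p x).toReal ∂q
        - (q T).toReal * Real.log (q T).toReal := by
  set c : ℝ≥0∞ := (q T)⁻¹ with hc
  have hTne : q T ≠ ⊤ := measure_ne_top q T
  have hc_ne_top : c ≠ ⊤ := by simpa [hc] using h0
  have hz : (0:ℝ) < (q T).toReal := ENNReal.toReal_pos h0 hTne
  have hcr : c.toReal = ((q T).toReal)⁻¹ := by simp [hc, ENNReal.toReal_inv]
  -- rnDeriv計算
  have hres : q.restrict T ≪ p := (Measure.restrict_le_self.absolutelyContinuous).trans hac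
  have h1 : (c • q.restrict T).rnDeriv p =ᵐ[p] c • (q.restrict T).rnDeriv p :=
    Measure.rnDeriv_smul_left_of_ne_top _ _ hc_ne_top
  have h2 : (q.restrict T).rnDeriv p =ᵐ[p] T.indicator (q.rnDeriv p) :=
    Measure.rnDeriv_restrict q p hT
  have h3 : (c • q.restrict T).rnDeriv p =ᵐ[p] fun x => c * T.indicator (q.rnDeriv p) x := by
    filter_upwards [h1, h2] with x hx1 hx2
    simp [hx1, hx2, smul_eq_mul]
  have h3' : (c • q.restrict T).rnDeriv p =ᵐ[q.restrict T]
      fun x => c * T.indicator (q.rnDeriv p) x := hres.ae_le h3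
  have hfpos : ∀ᵐ x ∂q, 0 < q.rnDeriv p x := Measure.rnDeriv_pos hac
  have hflt : ∀ᵐ x ∂q, q.rnDeriv p x < ⊤ := hac.ae_le (Measure.rnDeriv_lt_top q p)
  -- the integrand on the restricted measure
  have key : (fun x => Real.log (((c • q.restrict T).rnDeriv p x)).toReal)
      =ᵐ[q.restrict T]
      fun x => Real.log c.toReal + Real.log (q.rnDeriv p x).toReal := by
    filter_upwards [h3', ae_restrict_mem hT, ae_restrict_of_ae hfpos,
      ae_restrict_of_ae hflt] with x hx hxT hpos hlt
    rw [hx]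
    rw [Set.indicator_of_mem hxT, ENNReal.toReal_mul, Real.log_mul, ]
    · rw [hcr]
      exact inv_ne_zero hz.ne'
    · exact (ENNReal.toReal_pos hpos.ne' hlt.ne).ne'
  have hKL : KL (c • q.restrict T) p
      = c.toReal * ∫ x in T, (Real.log c.toReal + Real.log (q.rnDeriv p x).toReal) ∂q := by
    rw [KL, integral_smul_measure, smul_eq_mul]
    congr 1
    exact integral_congr_ae key
  rw [hKL]
  have hintT : Integrable (fun x => Real.log (q.rnDeriv p x).toReal) (q.restrict T) :=
    hint.restrict
  rw [integral_add (integrable_const _) hintT, integral_const]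
  simp only [Measure.restrict_apply_univ, measureReal_restrict_apply_univ, measureReal_def, smul_eq_mul]
  rw [hcr]
  have : Real.log ((q T).toReal)⁻¹ = - Real.log (q T).toReal := Real.log_inv _
  rw [this]
  field_simp
  ring

/-- Chain-rule decomposition of the KL divergence along a set `S`:
`KL(q‖p) = z·KL(q̃‖p) + (1−z)·KL(q̃ᶜ‖p) − H(z)` where `z = q(S)`,
`q̃ = z⁻¹·q|_S` and `q̃ᶜ = (1−z)⁻¹·q|_{Sᶜ}`. -/
theorem kl_restrict_decomposition {α : Type*} [MeasurableSpace α]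
    (p q : Measure α) [IsProbabilityMeasure p] [IsProbabilityMeasure q]
    (hac : q ≪ p)
    (hint : Integrable (fun x => Real.log (q.rnDeriv p x).toReal) q)
    (S : Set α) (hS : MeasurableSet S)
    (hz0 : 0 < (q S).toReal) (hz1 : (q S).toReal < 1) :
    KL q p =
      (q S).toReal * KL ((q S)⁻¹ • q.restrict S) p
        + (1 - (q S).toReal) * KL ((1 - q S)⁻¹ • q.restrict Sᶜ) p
        - binEnt (q S).toReal := by
  have hSne : q S ≠ ⊤ := measure_ne_top q S
  have hS0 : q S ≠ 0 := by
    intro h; simp [h] at hz0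
  have hcompl : q Sᶜ = 1 - q S := by
    rw [measure_compl hS hSne, measure_univ]
  have hScne : (q Sᶜ).toReal = 1 - (q S).toReal := by
    rw [hcompl, ENNReal.toReal_sub_of_le (prob_le_one) ENNReal.one_ne_top]
    simp
  have hSc0 : q Sᶜ ≠ 0 := by
    intro h
    rw [h] at hScne
    simp at hScne
    linarith
  have hA := kl_aux p q hac hint S hS hS0
  have hB := kl_aux p q hac hint Sᶜ hS.compl hSc0
  rw [hcompl] at hB
  rw [hcompl] at hScne
  rw [hScne] at hB
  have hsplit : KL q p = (∫ x in S, Real.log (q.rnDeriv p x).toReal ∂q)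
      + ∫ x in Sᶜ, Real.log (q.rnDeriv p x).toReal ∂q := by
    rw [KL, ← integral_add_compl hS hint]
  rw [hsplit, hA, hB, binEnt]
  ring
end

section
/- Let p and q be probability measures on a measurable space with q absolutely continuous with respect to p and KL(q‖p) finite. Let S be a measurable set with z = q(S) satisfying 1/2 ≤ z < 1, and let q̃ = z⁻¹ · q|_S be the restricted-and-normalized measure. Then KL(q̃‖p) ≤ 2·(KL(q‖p) + 1). -/
open MeasureTheory

open Real in
lemma aux_xlogx_ge_sub_one {x : ℝ} (hx : 0 ≤ x) : x - 1 ≤ x * Real.log x := by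
  rcases eq_or_lt_of_le hx with h | h
  · simp [← h]
  · have h1 : x * (1 - x⁻¹) ≤ x * Real.log x :=
      mul_le_mul_of_nonneg_left (Real.one_sub_inv_le_log_of_pos h) hx
    have h2 : x * (1 - x⁻¹) = x - 1 := by field_simp
    linarith

lemma aux_xlogx_ge_neg_exp {x : ℝ} (hx : 0 ≤ x) : -Real.exp (-1) ≤ x * Real.log x := by
  rcases eq_or_lt_of_le hx with h | h
  · simp [← h]; positivity
  · set t := Real.log x with ht
    have hx' : Real.exp t = x := Real.exp_log h
    have h1 : -t ≤ Real.exp (-1 - t) := by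
      have := Real.add_one_le_exp (-1 - t); linarith
    have h2 : Real.exp (-1 - t) = Real.exp (-1) / x := by rw [Real.exp_sub, hx']
    rw [h2] at h1
    have h3 : -t * x ≤ Real.exp (-1) := by rw [← le_div_iff₀ h]; linarith
    nlinarith


/-- If `z = q(S)` satisfies `1/2 ≤ z < 1`, then the KL divergence of the
restricted-and-normalized measure `q̃ = z⁻¹·q|_S` satisfies
`KL(q̃‖p) ≤ 2·(KL(q‖p) + 1)`. -/
theorem kl_restrict_le_two_mul {α : Type*} [MeasurableSpace α]
    (p q : Measure α) [IsProbabilityMeasure p] [IsProbabilityMeasure q]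
    (hac : q ≪ p)
    (hint : Integrable (fun x => Real.log (q.rnDeriv p x).toReal) q)
    (S : Set α) (hS : MeasurableSet S)
    (hz0 : (1 : ℝ) / 2 ≤ (q S).toReal) (hz1 : (q S).toReal < 1) :
    KL ((q S)⁻¹ • q.restrict S) p ≤ 2 * (KL q p + 1) := by
  set f : α → ℝ := fun x => (q.rnDeriv p x).toReal with hf
  set z : ℝ := (q S).toReal with hzdef
  have hqS_ne_top : q S ≠ ⊤ := measure_ne_top q S
  have hzpos : 0 < z := by linarith
  have hqS_ne_zero : q S ≠ 0 := by
    intro h; rw [h] at hzdef; simp [hzdef] at hzpos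
  have hinv_ne_top : (q S)⁻¹ ≠ ⊤ := by
    simpa [ENNReal.inv_eq_top] using hqS_ne_zero
  have hinv_toReal : ((q S)⁻¹).toReal = z⁻¹ := by
    rw [ENNReal.toReal_inv]
  -- the rnDeriv of the truncated measure, p-a.e.
  have hrn1 : ((q S)⁻¹ • q.restrict S).rnDeriv p
      =ᵐ[p] (q S)⁻¹ • (q.restrict S).rnDeriv p :=
    Measure.rnDeriv_smul_left_of_ne_top (q.restrict S) p hinv_ne_top
  have hrn2 : (q.restrict S).rnDeriv p =ᵐ[p] S.indicator (q.rnDeriv p) :=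
    Measure.rnDeriv_restrict q p hS
  have hrnp : ((q S)⁻¹ • q.restrict S).rnDeriv p
      =ᵐ[p] fun x => (q S)⁻¹ * S.indicator (q.rnDeriv p) x := by
    filter_upwards [hrn1, hrn2] with x h1 h2
    simp [h1, h2, smul_eq_mul]
  have hrnq : ∀ᵐ x ∂q, ((q S)⁻¹ • q.restrict S).rnDeriv p x
      = (q S)⁻¹ * S.indicator (q.rnDeriv p) x := hac.ae_le hrnp
  have hpos : ∀ᵐ x ∂q, 0 < q.rnDeriv p x := Measure.rnDeriv_pos hac
  have hlt_top : ∀ᵐ x ∂q, q.rnDeriv p x < ⊤ := hac.ae_le (Measure.rnDeriv_lt_top q p)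
  -- a.e. identity of the integrand on the restricted measure
  have hae : ∀ᵐ x ∂(q.restrict S),
      Real.log ((((q S)⁻¹ • q.restrict S).rnDeriv p x).toReal)
        = Real.log z⁻¹ + Real.log (f x) := by
    filter_upwards [ae_restrict_of_ae hrnq, ae_restrict_of_ae hpos,
      ae_restrict_of_ae hlt_top, ae_restrict_mem hS] with x h1 h2 h3 hx
    rw [h1, Set.indicator_of_mem hx, ENNReal.toReal_mul, hinv_toReal]
    rw [Real.log_mul (by positivity) (ENNReal.toReal_pos h2.ne' h3.ne).ne']
  -- compute KL of the truncated measure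
  have hKL1 : KL ((q S)⁻¹ • q.restrict S) p
      = z⁻¹ * (z * Real.log z⁻¹ + ∫ x in S, Real.log (f x) ∂q) := by
    rw [KL, integral_smul_measure, integral_congr_ae hae, hinv_toReal]
    rw [integral_add (integrable_const _) hint.restrict]
    simp [Measure.restrict_apply_univ, smul_eq_mul, mul_comm]
    exact Or.inl rfl
  have hsplit : (∫ x in S, Real.log (f x) ∂q) + (∫ x in Sᶜ, Real.log (f x) ∂q)
      = KL q p := by
    rw [KL]; exact integral_add_compl hS hint
  -- change of measure on Sᶜ
  have hg_int : Integrable (fun x => f x * Real.log (f x)) p := by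
    have := (MeasureTheory.integrable_rnDeriv_smul_iff hac
      (f := fun x => Real.log (f x))).mpr hint
    simpa [smul_eq_mul] using this
  have hBeq : (∫ x in Sᶜ, Real.log (f x) ∂q)
      = ∫ x in Sᶜ, f x * Real.log (f x) ∂p := by
    rw [← MeasureTheory.setIntegral_rnDeriv_smul hac hS.compl]
    simp [smul_eq_mul]
    rfl
  -- lower bound on the Sᶜ part
  have hBlow : -Real.exp (-1) ≤ ∫ x in Sᶜ, Real.log (f x) ∂q := by
    rw [hBeq]
    have h1 : ∫ x in Sᶜ, (-Real.exp (-1)) ∂p ≤ ∫ x in Sᶜ, f x * Real.log (f x) ∂p := by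
      refine setIntegral_mono_on ((integrableOn_const_iff (C := -Real.exp (-1)) (μ := p) (s := Sᶜ)).mpr (Or.inr ?_))
        hg_int.integrableOn hS.compl (fun x _ => aux_xlogx_ge_neg_exp ENNReal.toReal_nonneg)
      exact (measure_lt_top p Sᶜ)
    have h2 : ∫ x in Sᶜ, (-Real.exp (-1)) ∂p = (p Sᶜ).toReal * (-Real.exp (-1)) := by
      rw [setIntegral_const, smul_eq_mul]
      rfl
    have h3 : (p Sᶜ).toReal ≤ 1 := by
      have := prob_le_one (μ := p) (s := Sᶜ)
      simpa using ENNReal.toReal_mono (by simp) this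
    nlinarith [Real.exp_pos (-1)]
  -- KL nonnegativity
  have hKLnn : 0 ≤ KL q p := by
    have hKLp : KL q p = ∫ x, f x * Real.log (f x) ∂p := by
      rw [KL, ← MeasureTheory.integral_rnDeriv_smul hac]; simp [smul_eq_mul]; rfl
    have hfint : Integrable f p := Measure.integrable_toReal_rnDeriv
    have h1 : ∫ x, (f x - 1) ∂p ≤ ∫ x, f x * Real.log (f x) ∂p :=
      integral_mono (hfint.sub (integrable_const 1)) hg_int
        (fun x => aux_xlogx_ge_sub_one ENNReal.toReal_nonneg)
    have h2 : ∫ x, (f x - 1) ∂p = 0 := by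
      rw [integral_sub hfint (integrable_const 1), Measure.integral_toReal_rnDeriv hac]
      simp
    rw [hKLp]; linarith
  -- put everything together
  have hA : (∫ x in S, Real.log (f x) ∂q) = KL q p - (∫ x in Sᶜ, Real.log (f x) ∂q) := by
    linarith
  rw [hKL1, hA]
  have hzinv_le : z⁻¹ ≤ 2 := by
    rw [inv_le_comm₀ hzpos (by norm_num)]; linarith
  have hzinv_ge : 1 ≤ z⁻¹ := by
    rw [le_inv_comm₀ (by norm_num) hzpos]; linarith
  have hlog : Real.log z⁻¹ ≤ Real.log 2 := by
    exact Real.log_le_log (by positivity) hzinv_le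
  have hlog2 : Real.log 2 < 0.6931471808 := Real.log_two_lt_d9
  have hexp : Real.exp (-1) < 0.37 := by
    rw [Real.exp_neg]
    have h := Real.exp_one_gt_d9
    rw [inv_lt_comm₀ (Real.exp_pos 1) (by norm_num)]
    linarith
  set B := ∫ x in Sᶜ, Real.log (f x) ∂q
  have key : z⁻¹ * (KL q p - B) ≤ 2 * (KL q p + Real.exp (-1)) := by
    calc z⁻¹ * (KL q p - B) ≤ z⁻¹ * (KL q p + Real.exp (-1)) := by
          apply mul_le_mul_of_nonneg_left (by linarith) (by positivity)
      _ ≤ 2 * (KL q p + Real.exp (-1)) := by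
          apply mul_le_mul_of_nonneg_right hzinv_le (by linarith [Real.exp_pos (-1)])
  have hzlog : z * Real.log z⁻¹ ≤ z * Real.log 2 := by
    apply mul_le_mul_of_nonneg_left hlog (le_of_lt hzpos)
  have hfin : z⁻¹ * (z * Real.log z⁻¹) ≤ Real.log 2 := by
    rw [← mul_assoc, inv_mul_cancel₀ hzpos.ne', one_mul]
    exact hlog
  rw [mul_add]
  linarith
end

section
/- Let W_1,…,W_n and U_1,…,U_n be real h×h matrices with ‖W_l‖₂ ≤ β and ‖U_l‖₂ ≤ (1/n)·β for all l, where β > 0 and n ≥ 1. Let f_W denote the n-layer ReLU network with weights W_1,…,W_n and f_{W+U} the network with weights W_1+U_1,…,W_n+U_n. Then for every input x ∈ ℝ^h with ‖x‖₂ ≤ B, ‖f_{W+U}(x) − f_W(x)‖₂ ≤ e·B·β^{n−1}·Σ_{l=1}^n ‖U_l‖₂. -/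
open scoped BigOperators

/-- The spectral norm (ℓ2→ℓ2 operator norm) of a square real matrix. -/
noncomputable def spec {K : ℕ} (A : Matrix (Fin K) (Fin K) ℝ) : ℝ :=
  ‖Matrix.toEuclideanCLM (𝕜 := ℝ) A‖

/-- Euclidean (ℓ2) norm of a vector in `ℝ^h`. -/
noncomputable def vecNorm2 {h : ℕ} (x : Fin h → ℝ) : ℝ :=
  Real.sqrt (∑ i, (x i) ^ 2)

/-- Entrywise ReLU. -/
def relu {h : ℕ} (x : Fin h → ℝ) : Fin h → ℝ := fun i => max (x i) 0

/-- ReLU network on a list of weight matrices `[W₁, …, Wₙ]`: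
`netList [W₁, …, Wₙ] x = Wₙ φ(W_{n-1} φ(⋯ φ(W₁ x)⋯))` (no activation after the last layer). -/
def netList {h : ℕ} : List (Matrix (Fin h) (Fin h) ℝ) → (Fin h → ℝ) → (Fin h → ℝ)
  | [], x => x
  | [W], x => W.mulVec x
  | W :: W' :: rest, x => netList (W' :: rest) (relu (W.mulVec x))

/-- The n-layer ReLU network with weight matrices `W 0, …, W (n-1)` (applied in this order). -/
def net {h n : ℕ} (W : Fin n → Matrix (Fin h) (Fin h) ℝ) (x : Fin h → ℝ) : Fin h → ℝ :=
  netList (List.ofFn W) x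

noncomputable def toE {h : ℕ} (x : Fin h → ℝ) : EuclideanSpace ℝ (Fin h) :=
  (WithLp.equiv 2 _).symm x

lemma vecNorm2_eq {h : ℕ} (x : Fin h → ℝ) : vecNorm2 x = ‖toE x‖ := by
  rw [EuclideanSpace.norm_eq, vecNorm2]
  congr 1; apply Finset.sum_congr rfl; intro i _
  rw [Real.norm_eq_abs, sq_abs]; rfl

lemma toE_sub {h : ℕ} (a b : Fin h → ℝ) : toE (a - b) = toE a - toE b := rfl

lemma spec_nonneg {K : ℕ} (A : Matrix (Fin K) (Fin K) ℝ) : 0 ≤ spec A := norm_nonneg _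

lemma spec_add_le {K : ℕ} (A B : Matrix (Fin K) (Fin K) ℝ) : spec (A + B) ≤ spec A + spec B := by
  unfold spec; rw [map_add]; exact norm_add_le _ _

lemma mulVec_norm_le {h : ℕ} (A : Matrix (Fin h) (Fin h) ℝ) (x : Fin h → ℝ) :
    vecNorm2 (A.mulVec x) ≤ spec A * vecNorm2 x := by
  rw [vecNorm2_eq, vecNorm2_eq]
  have : toE (A.mulVec x) = (Matrix.toEuclideanCLM (𝕜 := ℝ) A) (toE x) := rfl
  rw [this]
  exact (Matrix.toEuclideanCLM (𝕜 := ℝ) A).le_opNorm (toE x)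

lemma relu_lip {h : ℕ} (a b : Fin h → ℝ) : vecNorm2 (relu a - relu b) ≤ vecNorm2 (a - b) := by
  unfold vecNorm2
  apply Real.sqrt_le_sqrt
  apply Finset.sum_le_sum
  intro i _
  have h1 : |max (a i) 0 - max (b i) 0| ≤ |a i - b i| := abs_max_sub_max_le_abs _ _ _
  calc ((relu a - relu b) i) ^ 2 = |max (a i) 0 - max (b i) 0| ^ 2 := by
        rw [sq_abs]; rfl
    _ ≤ |a i - b i| ^ 2 := by
        apply pow_le_pow_left₀ (abs_nonneg _) h1
    _ = ((a - b) i) ^ 2 := by rw [sq_abs]; rfl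

lemma relu_norm_le {h : ℕ} (a : Fin h → ℝ) : vecNorm2 (relu a) ≤ vecNorm2 a := by
  unfold vecNorm2
  apply Real.sqrt_le_sqrt
  apply Finset.sum_le_sum
  intro i _
  have : |max (a i) 0| ≤ |a i| := by
    rcases le_or_gt (a i) 0 with hle | hlt
    · simp [max_eq_right hle]
    · simp [max_eq_left hlt.le]
  calc (relu a i) ^ 2 = |max (a i) 0| ^ 2 := by rw [sq_abs]; rfl
    _ ≤ |a i| ^ 2 := pow_le_pow_left₀ (abs_nonneg _) this 2
    _ = (a i) ^ 2 := sq_abs _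

lemma vecNorm2_nonneg {h : ℕ} (a : Fin h → ℝ) : 0 ≤ vecNorm2 a := Real.sqrt_nonneg _

lemma vecNorm2_triangle {h : ℕ} (a b c : Fin h → ℝ) :
    vecNorm2 (a - c) ≤ vecNorm2 (a - b) + vecNorm2 (b - c) := by
  rw [vecNorm2_eq, vecNorm2_eq, vecNorm2_eq, toE_sub, toE_sub, toE_sub]
  exact norm_sub_le_norm_sub_add_norm_sub _ _ _

lemma netList_lip {h : ℕ} (β' : ℝ) (hβ' : 0 ≤ β') :
    ∀ (L : List (Matrix (Fin h) (Fin h) ℝ)), (∀ A ∈ L, spec A ≤ β') →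
    ∀ x y, vecNorm2 (netList L x - netList L y) ≤ β' ^ L.length * vecNorm2 (x - y) := by
  intro L
  induction L with
  | nil => intro _ x y; simpa [netList] using vecNorm2_nonneg (x - y)
  | cons V rest ih =>
    intro hcond x y
    have hV : spec V ≤ β' := hcond V List.mem_cons_self
    cases rest with
    | nil =>
      simp only [netList, List.length]
      have : V.mulVec x - V.mulVec y = V.mulVec (x - y) := (Matrix.mulVec_sub V x y).symm
      rw [this]
      calc vecNorm2 (V.mulVec (x - y)) ≤ spec V * vecNorm2 (x - y) := mulVec_norm_le _ _
        _ ≤ β' ^ 1 * vecNorm2 (x - y) := by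
            rw [pow_one]; exact mul_le_mul_of_nonneg_right hV (vecNorm2_nonneg _)
    | cons W r =>
      have hstep : netList (V :: W :: r) x = netList (W :: r) (relu (V.mulVec x)) := rfl
      have hstep' : netList (V :: W :: r) y = netList (W :: r) (relu (V.mulVec y)) := rfl
      rw [hstep, hstep']
      have hrest : ∀ A ∈ (W :: r), spec A ≤ β' := fun A hA => hcond A (List.mem_cons_of_mem _ hA)
      calc vecNorm2 (netList (W :: r) (relu (V.mulVec x)) - netList (W :: r) (relu (V.mulVec y)))
          ≤ β' ^ (W :: r).length * vecNorm2 (relu (V.mulVec x) - relu (V.mulVec y)) :=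
            ih hrest _ _
        _ ≤ β' ^ (W :: r).length * (spec V * vecNorm2 (x - y)) := by
            apply mul_le_mul_of_nonneg_left _ (pow_nonneg hβ' _)
            refine le_trans (relu_lip _ _) ?_
            rw [← Matrix.mulVec_sub]; exact mulVec_norm_le _ _
        _ ≤ β' ^ (V :: W :: r).length * vecNorm2 (x - y) := by
            have hlc : (V :: W :: r).length = (W :: r).length + 1 := rfl
            rw [hlc, pow_succ, mul_assoc]
            apply mul_le_mul_of_nonneg_left _ (pow_nonneg hβ' _)
            exact mul_le_mul_of_nonneg_right hV (vecNorm2_nonneg _)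

lemma zipSpec_nonneg {h : ℕ} : ∀ (Vs Ws : List (Matrix (Fin h) (Fin h) ℝ)),
    0 ≤ (List.zipWith (fun V W => spec (V - W)) Vs Ws).sum
  | [], _ => by simp
  | _ :: _, [] => by simp
  | V :: Vs, W :: Ws => by
    simp only [List.zipWith, List.sum_cons]
    exact add_nonneg (spec_nonneg _) (zipSpec_nonneg Vs Ws)

lemma netList_pert {h : ℕ} (β β' : ℝ) (hβ : 0 ≤ β) (hββ' : β ≤ β') :
    ∀ (Vs Ws : List (Matrix (Fin h) (Fin h) ℝ)), Vs.length = Ws.length →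
    (∀ A ∈ Ws, spec A ≤ β) → (∀ A ∈ Vs, spec A ≤ β') →
    ∀ x, vecNorm2 (netList Vs x - netList Ws x) ≤
      β' ^ (Vs.length - 1) * (List.zipWith (fun V W => spec (V - W)) Vs Ws).sum * vecNorm2 x := by
  intro Vs
  induction Vs with
  | nil =>
    intro Ws hlen _ _ x
    have : Ws = [] := List.length_eq_zero_iff.mp hlen.symm
    subst this
    simp [netList, vecNorm2]
  | cons V Vs' ih =>
    intro Ws hlen hWs hVs x
    obtain ⟨W, Ws', rfl⟩ : ∃ W Ws', Ws = W :: Ws' := by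
      cases Ws with
      | nil => simp at hlen
      | cons a l => exact ⟨a, l, rfl⟩
    have hlen' : Vs'.length = Ws'.length := by simpa using hlen
    have hβ' : (0:ℝ) ≤ β' := le_trans hβ hββ'
    have hVβ' : spec V ≤ β' := hVs V List.mem_cons_self
    have hWβ : spec W ≤ β := hWs W List.mem_cons_self
    have hsum_nonneg : 0 ≤ (List.zipWith (fun V W => spec (V - W)) Vs' Ws').sum :=
      zipSpec_nonneg Vs' Ws'
    cases Vs' with
    | nil =>
      have : Ws' = [] := List.length_eq_zero_iff.mp hlen'.symm
      subst this
      simp only [netList, List.length, List.zipWith, List.sum_cons, List.sum_nil, add_zero]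
      have : V.mulVec x - W.mulVec x = (V - W).mulVec x := (Matrix.sub_mulVec V W x).symm
      rw [this]
      simpa using mulVec_norm_le (V - W) x
    | cons V2 Vs'' =>
      obtain ⟨W2, Ws'', rfl⟩ : ∃ W2 Ws'', Ws' = W2 :: Ws'' := by
        cases Ws' with
        | nil => simp at hlen'
        | cons a l => exact ⟨a, l, rfl⟩
      set a := relu (V.mulVec x)
      set b := relu (W.mulVec x)
      have e1 : netList (V :: V2 :: Vs'') x = netList (V2 :: Vs'') a := rfl
      have e2 : netList (W :: W2 :: Ws'') x = netList (W2 :: Ws'') b := rfl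
      rw [e1, e2]
      have htri := vecNorm2_triangle (netList (V2 :: Vs'') a) (netList (V2 :: Vs'') b)
        (netList (W2 :: Ws'') b)
      have hVs' : ∀ A ∈ (V2 :: Vs''), spec A ≤ β' := fun A hA => hVs A (List.mem_cons_of_mem _ hA)
      have hWs' : ∀ A ∈ (W2 :: Ws''), spec A ≤ β := fun A hA => hWs A (List.mem_cons_of_mem _ hA)
      have hlip := netList_lip β' hβ' (V2 :: Vs'') hVs' a b
      have hab : vecNorm2 (a - b) ≤ spec (V - W) * vecNorm2 x := by
        refine le_trans (relu_lip _ _) ?_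
        rw [show V.mulVec x - W.mulVec x = (V - W).mulVec x from (Matrix.sub_mulVec V W x).symm]
        exact mulVec_norm_le _ _
      have hb : vecNorm2 b ≤ β' * vecNorm2 x := by
        refine le_trans (relu_norm_le _) (le_trans (mulVec_norm_le _ _) ?_)
        exact mul_le_mul_of_nonneg_right (le_trans hWβ hββ') (vecNorm2_nonneg _)
      have hih := ih (W2 :: Ws'') (by simpa using hlen') hWs' hVs' b
      -- lengths
      set m := (V2 :: Vs'').length with hm
      have hm1 : 1 ≤ m := Nat.succ_le_succ (Nat.zero_le _)
      have key1 : vecNorm2 (netList (V2 :: Vs'') a - netList (V2 :: Vs'') b)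
          ≤ β' ^ m * (spec (V - W) * vecNorm2 x) := by
        refine le_trans hlip ?_
        exact mul_le_mul_of_nonneg_left hab (pow_nonneg hβ' _)
      have key2 : vecNorm2 (netList (V2 :: Vs'') b - netList (W2 :: Ws'') b)
          ≤ β' ^ (m - 1) * (List.zipWith (fun V W => spec (V - W)) (V2 :: Vs'') (W2 :: Ws'')).sum
            * (β' * vecNorm2 x) := by
        refine le_trans hih ?_
        apply mul_le_mul_of_nonneg_left hb
        exact mul_nonneg (pow_nonneg hβ' _) hsum_nonneg
      have hpow : β' ^ (m - 1) * β' = β' ^ m := by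
        rw [← pow_succ, Nat.sub_add_cancel hm1]
      calc vecNorm2 (netList (V2 :: Vs'') a - netList (W2 :: Ws'') b)
          ≤ _ + _ := htri
        _ ≤ β' ^ m * (spec (V - W) * vecNorm2 x)
            + β' ^ (m - 1) * (List.zipWith (fun V W => spec (V - W)) (V2 :: Vs'') (W2 :: Ws'')).sum
              * (β' * vecNorm2 x) := add_le_add key1 key2
        _ = β' ^ ((V :: V2 :: Vs'').length - 1)
            * (List.zipWith (fun V W => spec (V - W)) (V :: V2 :: Vs'') (W :: W2 :: Ws'')).sum
            * vecNorm2 x := by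
            simp only [List.zipWith, List.sum_cons, List.length_cons]
            have hm' : Vs''.length + 1 + 1 - 1 = m := rfl
            rw [hm', ← hpow]
            ring

lemma zip_ofFn_spec_sum {h n : ℕ} (f g : Fin n → Matrix (Fin h) (Fin h) ℝ) :
    (List.zipWith (fun V W => spec (V - W)) (List.ofFn f) (List.ofFn g)).sum
      = ∑ i, spec (f i - g i) := by
  induction n with
  | zero => simp
  | succ m ih =>
    rw [List.ofFn_succ, List.ofFn_succ]
    simp only [List.zipWith, List.sum_cons]
    rw [ih, Fin.sum_univ_succ]

theorem net_perturbation_bound' {h : ℕ} (n : ℕ) (hn : 1 ≤ n) (β B : ℝ) (hβ : 0 < β)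
    (W U : Fin n → Matrix (Fin h) (Fin h) ℝ)
    (hW : ∀ l, spec (W l) ≤ β) (hU : ∀ l, spec (U l) ≤ β / n)
    (x : Fin h → ℝ) (hx : vecNorm2 x ≤ B) :
    vecNorm2 (net (fun l => W l + U l) x - net W x) ≤
      Real.exp 1 * B * β ^ (n - 1) * ∑ l, spec (U l) := by
  have hnR : (0:ℝ) < n := by exact_mod_cast hn
  set β' : ℝ := β * (1 + 1/n) with hβ'def
  have h1n : (0:ℝ) ≤ 1/n := by positivity
  have hββ' : β ≤ β' := by
    rw [hβ'def]; nlinarith [hβ.le]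
  have hβ'0 : (0:ℝ) ≤ β' := le_trans hβ.le hββ'
  have hWmem : ∀ A ∈ List.ofFn W, spec A ≤ β := by
    intro A hA
    obtain ⟨i, rfl⟩ := List.mem_ofFn.mp hA
    exact hW i
  have hVmem : ∀ A ∈ List.ofFn (fun l => W l + U l), spec A ≤ β' := by
    intro A hA
    obtain ⟨i, rfl⟩ := List.mem_ofFn.mp hA
    calc spec (W i + U i) ≤ spec (W i) + spec (U i) := spec_add_le _ _
      _ ≤ β + β / n := add_le_add (hW i) (hU i)
      _ = β' := by rw [hβ'def]; field_simp
  have hlen : (List.ofFn (fun l => W l + U l)).length = (List.ofFn W).length := by simp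
  have hmain := netList_pert β β' hβ.le hββ'
    (List.ofFn (fun l => W l + U l)) (List.ofFn W) hlen hWmem hVmem x
  have hzip : (List.zipWith (fun V W => spec (V - W))
      (List.ofFn (fun l => W l + U l)) (List.ofFn W)).sum = ∑ l, spec (U l) := by
    rw [zip_ofFn_spec_sum]
    apply Finset.sum_congr rfl
    intro i _
    congr 1
    abel
  rw [hzip, List.length_ofFn] at hmain
  have hS : (0:ℝ) ≤ ∑ l, spec (U l) := Finset.sum_nonneg fun l _ => spec_nonneg _
  have hB : (0:ℝ) ≤ B := le_trans (vecNorm2_nonneg x) hx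
  have hpow : β' ^ (n - 1) ≤ Real.exp 1 * β ^ (n - 1) := by
    have he1 : (1 + 1/(n:ℝ)) ≤ Real.exp (1/n) := by
      have := Real.add_one_le_exp (1/(n:ℝ)); linarith
    have he2 : (1 + 1/(n:ℝ)) ^ (n-1) ≤ Real.exp (1/n) ^ (n-1) :=
      pow_le_pow_left₀ (by positivity) he1 _
    have he3 : Real.exp (1/(n:ℝ)) ^ (n-1) ≤ Real.exp (1/(n:ℝ)) ^ n := by
      apply pow_le_pow_right₀ _ (Nat.sub_le n 1)
      rw [Real.one_le_exp_iff]; positivity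
    have he4 : Real.exp (1/(n:ℝ)) ^ n = Real.exp 1 := by
      rw [← Real.exp_nat_mul]
      congr 1
      field_simp
    have : (1 + 1/(n:ℝ)) ^ (n-1) ≤ Real.exp 1 := by
      rw [← he4]; exact le_trans he2 he3
    calc β' ^ (n-1) = β ^ (n-1) * (1 + 1/(n:ℝ)) ^ (n-1) := by rw [hβ'def, mul_pow]
      _ ≤ β ^ (n-1) * Real.exp 1 :=
        mul_le_mul_of_nonneg_left this (pow_nonneg hβ.le _)
      _ = Real.exp 1 * β ^ (n-1) := mul_comm _ _
  calc vecNorm2 (net (fun l => W l + U l) x - net W x)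
      ≤ β' ^ (n - 1) * (∑ l, spec (U l)) * vecNorm2 x := hmain
    _ ≤ β' ^ (n - 1) * (∑ l, spec (U l)) * B := by
        apply mul_le_mul_of_nonneg_left hx
        exact mul_nonneg (pow_nonneg hβ'0 _) hS
    _ ≤ (Real.exp 1 * β ^ (n - 1)) * (∑ l, spec (U l)) * B := by
        apply mul_le_mul_of_nonneg_right _ hB
        exact mul_le_mul_of_nonneg_right hpow hS
    _ = Real.exp 1 * B * β ^ (n - 1) * ∑ l, spec (U l) := by ring

/-- Perturbation bound for ReLU networks: if `‖W_l‖₂ ≤ β` and `‖U_l‖₂ ≤ β/n`, then for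
any input with `‖x‖₂ ≤ B`,
`‖f_{W+U}(x) − f_W(x)‖₂ ≤ e·B·β^{n−1}·∑_l ‖U_l‖₂`. -/
theorem net_perturbation_bound {h : ℕ} (n : ℕ) (hn : 1 ≤ n) (β B : ℝ) (hβ : 0 < β)
    (W U : Fin n → Matrix (Fin h) (Fin h) ℝ)
    (hW : ∀ l, spec (W l) ≤ β) (hU : ∀ l, spec (U l) ≤ β / n)
    (x : Fin h → ℝ) (hx : vecNorm2 x ≤ B) :
    vecNorm2 (net (fun l => W l + U l) x - net W x) ≤
      Real.exp 1 * B * β ^ (n - 1) * ∑ l, spec (U l) := by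
  exact net_perturbation_bound' n hn β B hβ W U hW hU x hx
end
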